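/- arXiv:1906.04084 — 3 statements merged into one kernel-verified Lean document; each statement's English description precedes it below -/
import Mathlib

section
/- Let s, k ≥ 2 be integers, 1 ≤ ℓ_1,…,ℓ_s ≤ k, ℓ = ℓ_1 + … + ℓ_s, L ≥ 1 a real, and let v_1,…,v_s be vertices of a graph G. Suppose there is a set 𝒯 of at least f(ℓ,L)/2 L-admissible spiders in G with length vector (ℓ_1,…,ℓ_s) and leaf vector (v_1,…,v_s). Then 𝒯 contains at least f(ℓ−1,L)^{16}/2 spiders which are pairwise vertex-disjoint apart from their leaves. -/
/-!
Take a maximal subfamily `𝒟 ⊆ 𝒯` whose cores (centre and inner leg vertices, at most `ℓ - 1`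
of them) are pairwise disjoint. Every spider of `𝒯` meets the union of these cores, so
`|𝒯| ≤ |𝒟| (ℓ - 1) max_x #{S ∈ 𝒯 : x ∈ core S}`. A spider with centre `x` is fixed by its legs,
and a spider whose `i`-th leg passes through `x` at position `j` is fixed by its truncation at
`x` and the rest of that leg; goodness of these pieces bounds each of the at most `ℓ - 1`
cases by `max_i f(i, L) f(ℓ - i, L)`. Hence `|𝒯| ≤ |𝒟| (ℓ - 1)² max_i f(i, L) f(ℓ - i, L)`,
and `f(ℓ, L) / 2 ≤ |𝒯|` with the recursion for `f(ℓ, L)` forces `|𝒟| ≥ f(ℓ - 1, L)^16 / 2`.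
-/

open Finset Filter

noncomputable section

namespace ExtremalSubdivision

universe u

/-- `Contains G H` means that the graph `G` contains a copy of the graph `H` as a subgraph. -/
def Contains {V : Type*} {W : Type*} (G : SimpleGraph V) (H : SimpleGraph W) : Prop :=
  ∃ f : H →g G, Function.Injective f

/-- `exNum n H` is the extremal number of `H` : the maximum number of edges in a graph on
`n` vertices containing no copy of `H`. -/
def exNum {W : Type*} (n : ℕ) (H : SimpleGraph W) : ℕ :=
  sSup {m : ℕ | ∃ G : SimpleGraph (Fin n), ¬Contains G H ∧ m = G.edgeSet.ncard}

/-- The `a`-th vertex on the subdivided path joining `i` (on the left side) to `j`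
(on the right side), `0 ≤ a ≤ k`, in the `k`-subdivision of `K_{s,t}`. -/
def subdivVtx (s t k : ℕ) (i : Fin s) (j : Fin t) (a : ℕ) :
    Fin s ⊕ Fin t ⊕ Fin s × Fin t × Fin (k - 1) :=
  if h0 : a = 0 then Sum.inl i
  else if h : a < k then Sum.inr (Sum.inr (i, j, ⟨a - 1, by omega⟩))
  else Sum.inr (Sum.inl j)

/-- The `k`-subdivision of the complete bipartite graph `K_{s,t}` : every edge `ij` of
`K_{s,t}` is replaced by a path of length `k`, internally vertex-disjoint from the others. -/
def KstSubdiv (s t k : ℕ) :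
    SimpleGraph (Fin s ⊕ Fin t ⊕ Fin s × Fin t × Fin (k - 1)) :=
  SimpleGraph.fromRel fun x y => ∃ (i : Fin s) (j : Fin t) (a : ℕ),
    a < k ∧ x = subdivVtx s t k i j a ∧ y = subdivVtx s t k i j (a + 1)

/-- A graph is `K`-almost-regular if its maximum degree is at most `K` times its
minimum degree. -/
def IsAlmostRegular {V : Type*} (G : SimpleGraph V) (K : ℝ) : Prop :=
  ∀ v w : V, ((G.neighborSet v).ncard : ℝ) ≤ K * ((G.neighborSet w).ncard : ℝ)

/-- The minimum degree of a graph. -/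
def minDeg {V : Type*} (G : SimpleGraph V) : ℕ :=
  sInf (Set.range fun v => (G.neighborSet v).ncard)

/-- Fuelled version of the function `f(ℓ, L)`. -/
def fAux (L : ℝ) : ℕ → ℕ → ℝ
  | 0, _ => L
  | _ + 1, 0 => L
  | _ + 1, 1 => L
  | fuel + 1, n + 2 =>
      1 + fAux L fuel (n + 1) ^ 16 * ((n : ℝ) + 1) ^ 2 *
        ⨆ i : Fin (n + 1), fAux L fuel (i.1 + 1) * fAux L fuel (n + 1 - i.1)

/-- The function `f(ℓ, L)` : `f(1, L) = L` and
`f(ℓ, L) = 1 + f(ℓ-1, L)^16 (ℓ-1)^2 max_{1 ≤ i ≤ ℓ-1} f(i, L) f(ℓ-i, L)`. -/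
def fJ (L : ℝ) (n : ℕ) : ℝ := fAux L n n

/-- A list of vertices is a path in `G` if consecutive entries are adjacent and there are
no repetitions. (A path of length `ℓ` is a list of `ℓ + 1` vertices.) -/
def IsPathLst {V : Type*} (G : SimpleGraph V) (p : List V) : Prop :=
  p.Chain' G.Adj ∧ p.Nodup

/-- `q` is an `L`-admissible path of length `n`, where `good m r` is the statement that the
path `r` of length `m` is `L`-good: `q` is a path of length `n` each of whose proper subpaths
is `L`-good. -/
def pathAdmWith {V : Type*} (G : SimpleGraph V) (good : ℕ → List V → Prop)
    (n : ℕ) (q : List V) : Prop :=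
  IsPathLst G q ∧ q.length = n + 1 ∧
    ∀ m, 1 ≤ m → m < n → ∀ r, r <:+: q → r.length = m + 1 → good m r

/-- Fuelled version of `L`-goodness for paths: a path of length `n` is `L`-good if it is
`L`-admissible and the number of `L`-admissible paths of length `n` between its endpoints
is at most `f(n, L)`. -/
def pathGoodAux {V : Type*} (G : SimpleGraph V) (L : ℝ) : ℕ → ℕ → List V → Prop
  | 0, _, _ => True
  | fuel + 1, n, p =>
      pathAdmWith G (fun m r => pathGoodAux G L fuel m r) n p ∧
      (({q : List V | pathAdmWith G (fun m r => pathGoodAux G L fuel m r) n q ∧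
          q.head? = p.head? ∧ q.getLast? = p.getLast?}).ncard : ℝ) ≤ fJ L n

/-- The path `p` (a list of at least two vertices) is `L`-good. -/
def PathGood {V : Type*} (G : SimpleGraph V) (L : ℝ) (p : List V) : Prop :=
  2 ≤ p.length ∧ pathGoodAux G L p.length (p.length - 1) p

/-- The path `p` (a list of at least two vertices) is `L`-admissible. -/
def PathAdmissible {V : Type*} (G : SimpleGraph V) (L : ℝ) (p : List V) : Prop :=
  2 ≤ p.length ∧ pathAdmWith G (fun m r => pathGoodAux G L (m + 1) m r) (p.length - 1) p

/-- An (ordered, generalised) `s`-legged spider is recorded as a pair `S = (u, P)` where `u`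
is the centre and `P i` is the `i`-th leg: a path starting at `u` (given as the list of its
vertices, the first one being `u`). `SpiderShape G S` says that this data indeed defines a
spider in `G`: each leg is a path starting at the centre, and two distinct legs share no
vertex other than the centre. (A leg of length `0` is just the one-element list `[u]`.) -/
def SpiderShape {V : Type*} {s : ℕ} (G : SimpleGraph V) (S : V × (Fin s → List V)) : Prop :=
  (∀ i, IsPathLst G (S.2 i) ∧ (S.2 i).head? = some S.1) ∧
  ∀ i j, i ≠ j → ∀ x, x ∈ S.2 i → x ∈ S.2 j → x = S.1

/-- The length (number of edges) of the `i`-th leg of the spider `S`. -/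
def legLen {V : Type*} {s : ℕ} (S : V × (Fin s → List V)) (i : Fin s) : ℕ :=
  (S.2 i).length - 1

/-- The spider obtained from `S` by truncating its `i`-th leg to length `j`. -/
def truncLeg {V : Type*} {s : ℕ} (S : V × (Fin s → List V)) (i : Fin s) (j : ℕ) :
    V × (Fin s → List V) :=
  (S.1, Function.update S.2 i ((S.2 i).take (j + 1)))

/-- `S` is an `L`-admissible spider of total length `n`, where `pgood` is `L`-goodness for
paths and `good m T` is the statement that the spider `T` of total length `m` is `L`-good.
A spider with all legs of length `1` is always admissible; otherwise all legs must be
`L`-good paths and every spider obtained by truncating one leg must be `L`-good. -/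
def spiderAdmWith {V : Type*} {s : ℕ} (G : SimpleGraph V) (pgood : List V → Prop)
    (good : ℕ → V × (Fin s → List V) → Prop) (n : ℕ) (S : V × (Fin s → List V)) : Prop :=
  SpiderShape G S ∧ (∀ i, 1 ≤ legLen S i) ∧ (∑ i, legLen S i) = n ∧
    ((∀ i, legLen S i = 1) ∨
      ((∀ i, pgood (S.2 i)) ∧
        ∀ (i : Fin s) (j : ℕ), 1 ≤ j → j < legLen S i →
          ∀ m : ℕ, m < n → m = n - (legLen S i - j) → good m (truncLeg S i j)))

/-- Fuelled version of `L`-goodness for spiders: a spider of total length `n` is `L`-good if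
it is `L`-admissible and the number of `L`-admissible spiders with the same length vector and
the same leaf vector is at most `f(n, L)`. -/
def spiderGoodAux {V : Type*} {s : ℕ} (G : SimpleGraph V) (L : ℝ) :
    ℕ → ℕ → V × (Fin s → List V) → Prop
  | 0, _, _ => True
  | fuel + 1, n, S =>
      spiderAdmWith G (PathGood G L) (fun m T => spiderGoodAux G L fuel m T) n S ∧
      (({T : V × (Fin s → List V) |
          spiderAdmWith G (PathGood G L) (fun m T' => spiderGoodAux G L fuel m T') n T ∧
          (∀ i, (T.2 i).length = (S.2 i).length) ∧
          ∀ i, (T.2 i).getLast? = (S.2 i).getLast?}).ncard : ℝ) ≤ fJ L n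

/-- The spider `S` is `L`-good. -/
def SpiderGood {V : Type*} {s : ℕ} (G : SimpleGraph V) (L : ℝ)
    (S : V × (Fin s → List V)) : Prop :=
  spiderGoodAux G L ((∑ i, legLen S i) + 1) (∑ i, legLen S i) S

/-- The spider `S` is `L`-admissible. -/
def SpiderAdmissible {V : Type*} {s : ℕ} (G : SimpleGraph V) (L : ℝ)
    (S : V × (Fin s → List V)) : Prop :=
  spiderAdmWith G (PathGood G L) (fun m T => spiderGoodAux G L (m + 1) m T)
    (∑ i, legLen S i) S

/-- `R` is a subspider of `T`: they have the same centre and each leg of `R` is an initial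
subpath of the corresponding leg of `T`. -/
def IsSubspider {V : Type*} {s : ℕ} (R T : V × (Fin s → List V)) : Prop :=
  R.1 = T.1 ∧ ∀ i, R.2 i <+: T.2 i

/-- The generalised subspider of `S` obtained by shortening the `i`-th leg by `γ i` edges. -/
def truncBy {V : Type*} {s : ℕ} (S : V × (Fin s → List V)) (γ : Fin s → ℕ) :
    V × (Fin s → List V) :=
  (S.1, fun i => (S.2 i).take ((S.2 i).length - γ i))


/-- The number of edges of `F` incident to at least one vertex of `S`. -/
def edgesTouching {W : Type*} (F : SimpleGraph W) (S : Set W) : ℕ :=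
  {e ∈ F.edgeSet | ∃ x ∈ S, x ∈ e}.ncard

/-- The density `ρ_F(S) = e_S / |S|`. -/
def rho {W : Type*} (F : SimpleGraph W) (S : Set W) : ℝ :=
  (edgesTouching F S : ℝ) / (S.ncard : ℝ)

/-- `ρ(F) = ρ_F(V(F) ∖ R)` for a graph `F` rooted at `R`. -/
def rhoTop {W : Type*} (F : SimpleGraph W) (R : Set W) : ℝ := rho F Rᶜ

/-- The rooted graph `F` (with root set `R`) is balanced if `ρ_F(S) ≥ ρ(F)` for every
nonempty `S ⊆ V(F) ∖ R`. -/
def IsBalanced {W : Type*} (F : SimpleGraph W) (R : Set W) : Prop :=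
  ∀ S : Set W, S ⊆ Rᶜ → S.Nonempty → rhoTop F R ≤ rho F S

open Classical in
/-- The image of the vertex `w` of `F` in the `a`-th copy of `F` inside the rooted
`t`-blowup of `F` (rooted at `R`). -/
def blowupMap {W : Type*} (R : Set W) (t : ℕ) (a : Fin t) (w : W) :
    ↥R ⊕ Fin t × ↥(Rᶜ) :=
  if h : w ∈ R then Sum.inl ⟨w, h⟩ else Sum.inr (a, ⟨w, h⟩)

/-- The rooted `t`-blowup `t ∗ F` of the graph `F` rooted at `R`: take `t` disjoint copies
of `F` and identify the `t` copies of each root. -/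
def Blowup {W : Type*} (F : SimpleGraph W) (R : Set W) (t : ℕ) :
    SimpleGraph (↥R ⊕ Fin t × ↥(Rᶜ)) :=
  SimpleGraph.fromRel fun x y => ∃ (a : Fin t) (w w' : W),
    F.Adj w w' ∧ x = blowupMap R t a w ∧ y = blowupMap R t a w'

/-- The vertex type of the abstract `s`-legged spider with length vector `kk`:
a centre plus, for each leg `i`, the vertices `(i, 0), …, (i, kk i - 1)` of that leg. -/
abbrev SpiderVtx (s : ℕ) (kk : Fin s → ℕ) : Type := Unit ⊕ (Σ i : Fin s, Fin (kk i))

/-- The `a`-th vertex (with `0 ≤ a ≤ kk i`) on the `i`-th leg of the abstract spider;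
`a = 0` is the centre. -/
def spiderVtx {s : ℕ} (kk : Fin s → ℕ) (i : Fin s) (a : ℕ) : SpiderVtx s kk :=
  if h : 1 ≤ a ∧ a ≤ kk i then Sum.inr ⟨i, ⟨a - 1, by omega⟩⟩ else Sum.inl ()

/-- The abstract `s`-legged spider with length vector `kk`, as a graph: `s` paths of lengths
`kk 0, …, kk (s-1)` starting at a common centre and otherwise disjoint. -/
def SpiderGraph (s : ℕ) (kk : Fin s → ℕ) : SimpleGraph (SpiderVtx s kk) :=
  SimpleGraph.fromRel fun x y => ∃ (i : Fin s) (a : ℕ),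
    a < kk i ∧ x = spiderVtx kk i a ∧ y = spiderVtx kk i (a + 1)

/-- The set of leaves of the abstract spider (the root set). -/
def spiderRoots (s : ℕ) (kk : Fin s → ℕ) : Set (SpiderVtx s kk) :=
  Set.range fun i => spiderVtx kk i (kk i)


universe v

section RecursionF

/-- `max_{1 ≤ i ≤ ℓ-1} f(i, L) f(ℓ-i, L)`, the last factor in the recursion for `f(ℓ, L)`. -/
def fJPairMax (L : ℝ) (ℓ : ℕ) : ℝ :=
  ⨆ i : Fin (ℓ - 1), fJ L (i.1 + 1) * fJ L (ℓ - 1 - i.1)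

lemma fAux_succ_fuel (L : ℝ) : ∀ fuel m, m ≤ fuel → fAux L (fuel + 1) m = fAux L fuel m
  | 0, 0, _ => rfl
  | _ + 1, 0, _ => rfl
  | _ + 1, 1, _ => rfl
  | fuel + 1, n + 2, h => by
    simp only [fAux]
    rw [fAux_succ_fuel L fuel (n + 1) (by omega)]
    congr 2
    refine iSup_congr fun i => ?_
    rw [fAux_succ_fuel L fuel (i.1 + 1) (by omega),
      fAux_succ_fuel L fuel (n + 1 - i.1) (by omega)]

lemma fAux_eq_fJ (L : ℝ) {m fuel : ℕ} (h : m ≤ fuel) : fAux L fuel m = fJ L m := by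
  induction fuel, h using Nat.le_induction with
  | base => rfl
  | succ fuel hm ih => rw [fAux_succ_fuel L fuel m hm, ih]

lemma fJ_eq (L : ℝ) {ℓ : ℕ} (hℓ : 2 ≤ ℓ) :
    fJ L ℓ = 1 + fJ L (ℓ - 1) ^ 16 * ((ℓ - 1 : ℕ) : ℝ) ^ 2 * fJPairMax L ℓ := by
  obtain ⟨n, rfl⟩ : ∃ n, ℓ = n + 2 := ⟨ℓ - 2, by omega⟩
  show fAux L (n + 2) (n + 2) = _
  simp only [fAux, fJPairMax]
  rw [fAux_eq_fJ L (le_refl (n + 1))]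
  push_cast
  congr 2
  refine iSup_congr fun (i : Fin (n + 1)) => ?_
  rw [fAux_eq_fJ L (by omega : i.1 + 1 ≤ n + 1),
    fAux_eq_fJ L (by omega : n + 1 - i.1 ≤ n + 1)]

lemma one_le_fJ {L : ℝ} (hL : 1 ≤ L) (n : ℕ) : 1 ≤ fJ L n := by
  induction n using Nat.strong_induction_on with
  | _ n ih =>
    match n, ih with
    | 0, _ => exact hL
    | 1, _ => exact hL
    | n + 2, ih =>
      have hmax : 0 ≤ fJPairMax L (n + 2) := Real.iSup_nonneg fun i =>
        mul_nonneg (zero_le_one.trans (ih _ (by omega))) (zero_le_one.trans (ih _ (by omega)))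
      rw [fJ_eq L (by omega : 2 ≤ n + 2)]
      have hf := pow_nonneg (zero_le_one.trans (ih (n + 2 - 1) (by omega))) 16
      have := mul_nonneg (mul_nonneg hf (sq_nonneg ((n + 2 - 1 : ℕ) : ℝ))) hmax
      linarith

lemma fJ_nonneg {L : ℝ} (hL : 1 ≤ L) (n : ℕ) : 0 ≤ fJ L n :=
  zero_le_one.trans (one_le_fJ hL n)

lemma fJPairMax_nonneg {L : ℝ} (hL : 1 ≤ L) (ℓ : ℕ) : 0 ≤ fJPairMax L ℓ :=
  Real.iSup_nonneg fun _ => mul_nonneg (fJ_nonneg hL _) (fJ_nonneg hL _)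

lemma fJ_mul_le_fJPairMax (L : ℝ) {a b ℓ : ℕ} (ha : 1 ≤ a) (hb : 1 ≤ b) (hab : a + b = ℓ) :
    fJ L a * fJ L b ≤ fJPairMax L ℓ := by
  have hle := le_ciSup (Set.finite_range fun i : Fin (ℓ - 1) =>
    fJ L (i.1 + 1) * fJ L (ℓ - 1 - i.1)).bddAbove ⟨a - 1, by omega⟩
  rwa [show a - 1 + 1 = a by omega, show ℓ - 1 - (a - 1) = b by omega] at hle

lemma fJPairMax_le_fJ {L : ℝ} (hL : 1 ≤ L) {ℓ : ℕ} (hℓ : 2 ≤ ℓ) : fJPairMax L ℓ ≤ fJ L ℓ := by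
  have hf : 1 ≤ fJ L (ℓ - 1) ^ 16 := one_le_pow₀ (one_le_fJ hL _)
  have hc : 1 ≤ ((ℓ - 1 : ℕ) : ℝ) ^ 2 :=
    one_le_pow₀ (by exact_mod_cast (by omega : 1 ≤ ℓ - 1))
  have hM := fJPairMax_nonneg hL ℓ
  rw [fJ_eq L hℓ]
  nlinarith [mul_le_mul hf hc zero_le_one (by positivity)]

lemma fJ_mul_le_fJ_add {L : ℝ} (hL : 1 ≤ L) {a b : ℕ} (ha : 1 ≤ a) (hb : 1 ≤ b) :
    fJ L a * fJ L b ≤ fJ L (a + b) :=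
  (fJ_mul_le_fJPairMax L ha hb rfl).trans (fJPairMax_le_fJ hL (by omega))

lemma prod_fJ_le_fJ_sum {L : ℝ} (hL : 1 ≤ L) {ι : Type*} {t : Finset ι} (g : ι → ℕ)
    (ht : t.Nonempty) (hg : ∀ i ∈ t, 1 ≤ g i) :
    ∏ i ∈ t, fJ L (g i) ≤ fJ L (∑ i ∈ t, g i) := by
  induction ht using Finset.Nonempty.cons_induction with
  | singleton i => simp
  | cons i t hi ht ih =>
    rw [prod_cons, sum_cons]
    obtain ⟨j, hj⟩ := ht
    have hsum : 1 ≤ ∑ j ∈ t, g j :=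
      (hg j (mem_cons_of_mem hj)).trans (single_le_sum (fun _ _ => Nat.zero_le _) hj)
    calc fJ L (g i) * ∏ j ∈ t, fJ L (g j)
        ≤ fJ L (g i) * fJ L (∑ j ∈ t, g j) :=
          mul_le_mul_of_nonneg_left (ih fun j hj => hg j (mem_cons_of_mem hj)) (fJ_nonneg hL _)
      _ ≤ fJ L (g i + ∑ j ∈ t, g j) := fJ_mul_le_fJ_add hL (hg i (mem_cons_self i t)) hsum

end RecursionF

section MaximalDisjoint

variable {α β : Type*}

lemma exists_pairwiseDisjoint_forall_not_disjoint (𝒯 : Finset α) (c : α → Finset β)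
    (hne : ∀ S ∈ 𝒯, (c S).Nonempty) :
    ∃ 𝒟 ⊆ 𝒯, (𝒟 : Set α).PairwiseDisjoint c ∧ ∀ S ∈ 𝒯, ∃ T ∈ 𝒟, ¬Disjoint (c S) (c T) := by
  classical
  obtain ⟨𝒟, h𝒟, hmax⟩ := exists_max_image
    (𝒯.powerset.filter fun 𝒟 : Finset α => (𝒟 : Set α).PairwiseDisjoint c) card
    ⟨∅, by simp⟩
  rw [mem_filter, mem_powerset] at h𝒟
  refine ⟨𝒟, h𝒟.1, h𝒟.2, fun S hS => ?_⟩
  by_cases hS𝒟 : S ∈ 𝒟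
  · exact ⟨S, hS𝒟, by simpa [← nonempty_iff_ne_empty] using hne S hS⟩
  by_contra! hdisj
  have hins := hmax (insert S 𝒟) <| by
    rw [mem_filter, mem_powerset, coe_insert, Set.pairwiseDisjoint_insert]
    exact ⟨insert_subset hS h𝒟.1, h𝒟.2, fun T hT _ => hdisj T hT⟩
  rw [card_insert_of_notMem hS𝒟] at hins
  omega

/-- A maximal subfamily `𝒟` with pairwise disjoint `c`-sets meets every member of `𝒯` inside
the at most `#𝒟 * m` points of their union. -/
lemma exists_pairwiseDisjoint_card_le [DecidableEq β] (𝒯 : Finset α) (c : α → Finset β)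
    (m : ℕ) (N : ℝ)
    (hne : ∀ S ∈ 𝒯, (c S).Nonempty) (hm : ∀ S ∈ 𝒯, #(c S) ≤ m)
    (hN : ∀ x, (#{S ∈ 𝒯 | x ∈ c S} : ℝ) ≤ N) :
    ∃ 𝒟 ⊆ 𝒯, (𝒟 : Set α).PairwiseDisjoint c ∧ (#𝒯 : ℝ) ≤ #𝒟 * m * N := by
  classical
  obtain ⟨𝒟, h𝒟𝒯, hdisj, hmeet⟩ := exists_pairwiseDisjoint_forall_not_disjoint 𝒯 c hne
  refine ⟨𝒟, h𝒟𝒯, hdisj, ?_⟩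
  obtain rfl | ⟨S, hS⟩ := 𝒯.eq_empty_or_nonempty
  · simp [subset_empty.1 h𝒟𝒯]
  obtain ⟨x, -⟩ := hne S hS
  have hN0 : 0 ≤ N := (Nat.cast_nonneg _).trans (hN x)
  set B := 𝒟.biUnion c
  have hcover : 𝒯 ⊆ B.biUnion fun x => {S ∈ 𝒯 | x ∈ c S} := by
    intro S hS
    obtain ⟨T, hT, hST⟩ := hmeet S hS
    obtain ⟨x, hxS, hxT⟩ := not_disjoint_iff.1 hST
    exact mem_biUnion.2 ⟨x, mem_biUnion.2 ⟨T, hT, hxT⟩, mem_filter.2 ⟨hS, hxS⟩⟩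
  have hB : (#B : ℝ) ≤ #𝒟 * m := by
    have := card_biUnion_le.trans (sum_le_card_nsmul 𝒟 (fun T => #(c T)) m
      fun T hT => hm T (h𝒟𝒯 hT))
    exact_mod_cast this
  calc (#𝒯 : ℝ) ≤ ∑ x ∈ B, (#{S ∈ 𝒯 | x ∈ c S} : ℝ) := by
        exact_mod_cast (card_le_card hcover).trans card_biUnion_le
    _ ≤ #B * N := by simpa using sum_le_card_nsmul B _ N fun x _ => hN x
    _ ≤ #𝒟 * m * N := mul_le_mul_of_nonneg_right hB hN0

end MaximalDisjoint

lemma List.head?_eq_or_exists_getElem?_of_mem {α : Type*} {l : List α} {x : α} (hx : x ∈ l)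
    (hlast : l.getLast? ≠ some x) :
    l.head? = some x ∨ ∃ j ∈ Ico 1 (l.length - 1), l[j]? = some x := by
  obtain ⟨p, hp, rfl⟩ := List.getElem_of_mem hx
  rcases Nat.eq_zero_or_pos p with rfl | hp0
  · exact Or.inl (by rw [List.head?_eq_getElem?, List.getElem?_eq_getElem hp])
  have hpl : p ≠ l.length - 1 := by
    rintro rfl
    exact hlast (by rw [List.getLast?_eq_getElem?, List.getElem?_eq_getElem hp])
  exact Or.inr ⟨p, mem_Ico.2 ⟨hp0, by omega⟩, List.getElem?_eq_getElem hp⟩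

lemma List.getLast?_take_succ {α : Type*} {l : List α} {j : ℕ} (h : j < l.length) :
    (l.take (j + 1)).getLast? = l[j]? := by
  simp [List.getLast?_take, List.getElem?_eq_getElem h]

lemma one_add_sum_sub_one_le {ι : Type*} [Fintype ι] {g : ι → ℕ} (hι : 2 ≤ Fintype.card ι)
    (hg : ∀ i, 1 ≤ g i) : 1 + ∑ i, (g i - 1) ≤ ∑ i, g i - 1 := by
  have h : ∑ i, (g i - 1) + Fintype.card ι = ∑ i, g i := by
    rw [Fintype.card_eq_sum_ones, ← sum_add_distrib]
    exact sum_congr rfl fun i _ => by have := hg i; omega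
  omega

lemma card_le_of_forall_subset_ncard_le {α : Type*} {𝒮 : Finset α} {A : α → Set α} {r : ℝ}
    (hr : 0 ≤ r) (h : ∀ a ∈ 𝒮, (𝒮 : Set α) ⊆ A a ∧ (A a).Finite ∧ ((A a).ncard : ℝ) ≤ r) :
    (#𝒮 : ℝ) ≤ r := by
  obtain rfl | ⟨a, ha⟩ := 𝒮.eq_empty_or_nonempty
  · simpa using hr
  obtain ⟨hsub, hfin, hcard⟩ := h a ha
  rw [← Set.ncard_coe_finset]
  exact le_trans (by exact_mod_cast Set.ncard_le_ncard hsub hfin) hcard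

section Paths

variable {V : Type*} {G : SimpleGraph V} {L : ℝ} {p : List V}

lemma pathGood_of_length_eq_two (hL : 1 ≤ L) (hp : IsPathLst G p) (hlen : p.length = 2) :
    PathGood G L p := by
  refine ⟨hlen.ge, ?_⟩
  rw [hlen]
  refine ⟨⟨hp, hlen, fun m hm hm' => by omega⟩, ?_⟩
  have hsub : {q : List V | pathAdmWith G (fun m r => pathGoodAux G L 1 m r) 1 q ∧
      q.head? = p.head? ∧ q.getLast? = p.getLast?} ⊆ {p} := by
    rintro q ⟨⟨-, hq, -⟩, hhead, hlast⟩
    obtain ⟨a, b, rfl⟩ := List.length_eq_two.1 hq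
    obtain ⟨c, d, rfl⟩ := List.length_eq_two.1 hlen
    simp_all
  calc _ ≤ (({p} : Set (List V)).ncard : ℝ) := by
        exact_mod_cast Set.ncard_le_ncard hsub (Set.finite_singleton p)
    _ ≤ fJ L 1 := by rw [Set.ncard_singleton, Nat.cast_one]; exact hL

lemma PathGood.pathGoodAux_succ {n : ℕ} (h : PathGood G L p) (hlen : p.length = n + 1) :
    pathGoodAux G L (n + 1) n p := by
  simpa [hlen] using h.2

lemma PathGood.pathGoodAux_drop {n j : ℕ} (h : PathGood G L p) (hlen : p.length = n + 2)
    (hj : 1 ≤ j) (hjn : j ≤ n) : pathGoodAux G L (n + 1) (n + 1 - j) (p.drop j) :=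
  (h.pathGoodAux_succ hlen).1.2.2 (n + 1 - j) (by omega) (by omega) _
    (List.drop_suffix j p).isInfix (by rw [List.length_drop]; omega)

lemma card_le_fJ_of_pathGoodAux [Finite V] (hL : 1 ≤ L) {fuel n : ℕ} {P : Finset (List V)}
    {a b : Option V}
    (h : ∀ p ∈ P, pathGoodAux G L (fuel + 1) n p ∧ p.head? = a ∧ p.getLast? = b) :
    (#P : ℝ) ≤ fJ L n := by
  refine card_le_of_forall_subset_ncard_le (fJ_nonneg hL n) fun p hp => ⟨?_, ?_, (h p hp).1.2⟩
  · intro q hq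
    obtain ⟨hgood, hhead, hlast⟩ := h q hq
    exact ⟨hgood.1, by rw [hhead, (h p hp).2.1], by rw [hlast, (h p hp).2.2]⟩
  · exact (List.finite_length_eq V (n + 1)).subset fun q hq => hq.1.2.1

end Paths

section Spiders

variable {V : Type*} {s : ℕ}

lemma eq_of_truncLeg_eq_of_drop_eq {S T : V × (Fin s → List V)} {i : Fin s} {j : ℕ}
    (htr : truncLeg S i j = truncLeg T i j) (hdrop : (S.2 i).drop j = (T.2 i).drop j) :
    S = T := by
  simp only [truncLeg, Prod.mk.injEq] at htr
  refine Prod.ext htr.1 (funext fun i' => ?_)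
  have := congrFun htr.2 i'
  rcases eq_or_ne i' i with rfl | hi'
  · simp only [Function.update_self] at this
    rw [← List.take_append_drop (j + 1) (S.2 i'), ← List.take_append_drop (j + 1) (T.2 i'),
      ← List.tail_drop, ← List.tail_drop, this, hdrop]
  · simpa [Function.update_of_ne hi'] using this

lemma finite_setOf_length_snd_eq [Finite V] (len : Fin s → ℕ) :
    {T : V × (Fin s → List V) | ∀ i, (T.2 i).length = len i}.Finite :=
  (Set.finite_univ.prod (Set.Finite.pi fun i => List.finite_length_eq V (len i))).subset
    fun _ hT => ⟨trivial, fun i _ => hT i⟩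

variable [DecidableEq V]

/-- The centre and the inner vertices of the legs: two spiders with the same leaf vector are
vertex-disjoint apart from their leaves exactly when their cores are disjoint. -/
def spiderCore (S : V × (Fin s → List V)) : Finset V :=
  insert S.1 (univ.biUnion fun i => (Ico 1 (legLen S i)).biUnion fun j => (S.2 i)[j]?.toFinset)

lemma mem_spiderCore {S : V × (Fin s → List V)} {x : V} :
    x ∈ spiderCore S ↔ x = S.1 ∨ ∃ i, ∃ j ∈ Ico 1 (legLen S i), (S.2 i)[j]? = some x := by
  simp [spiderCore, eq_comm]

lemma card_spiderCore_le (S : V × (Fin s → List V)) :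
    #(spiderCore S) ≤ 1 + ∑ i, (legLen S i - 1) := by
  calc #(spiderCore S) ≤ #(univ.biUnion fun i => (Ico 1 (legLen S i)).biUnion
        fun j => (S.2 i)[j]?.toFinset) + 1 := card_insert_le _ _
    _ ≤ ∑ i, ∑ j ∈ Ico 1 (legLen S i), #(S.2 i)[j]?.toFinset + 1 := by
        gcongr
        exact card_biUnion_le.trans (sum_le_sum fun i _ => card_biUnion_le)
    _ ≤ ∑ i, ∑ _j ∈ Ico 1 (legLen S i), 1 + 1 := by
        gcongr with i _ j _
        cases (S.2 i)[j]? <;> simp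
    _ = 1 + ∑ i, (legLen S i - 1) := by simp [add_comm]

lemma mem_spiderCore_of_mem_leg {S : V × (Fin s → List V)} {x : V} {i : Fin s}
    (hhead : (S.2 i).head? = some S.1) (hx : x ∈ S.2 i) (hlast : (S.2 i).getLast? ≠ some x) :
    x ∈ spiderCore S := by
  rw [mem_spiderCore]
  rcases List.head?_eq_or_exists_getElem?_of_mem hx hlast with h | ⟨j, hj, hjx⟩
  · exact Or.inl (Option.some_injective _ (h.symm.trans hhead))
  · exact Or.inr ⟨i, j, hj, hjx⟩

lemma card_filter_mem_spiderCore_le_sum {𝒯 : Finset (V × (Fin s → List V))} {ℓv : Fin s → ℕ}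
    (hlen : ∀ S ∈ 𝒯, ∀ i, legLen S i = ℓv i) (x : V) :
    #{S ∈ 𝒯 | x ∈ spiderCore S} ≤ #{S ∈ 𝒯 | S.1 = x} +
      ∑ i, ∑ j ∈ Ico 1 (ℓv i), #{S ∈ 𝒯 | (S.2 i)[j]? = some x} := by
  have hsub : {S ∈ 𝒯 | x ∈ spiderCore S} ⊆ {S ∈ 𝒯 | S.1 = x} ∪
      univ.biUnion fun i => (Ico 1 (ℓv i)).biUnion fun j => {S ∈ 𝒯 | (S.2 i)[j]? = some x} := by
    intro S hS
    obtain ⟨hS𝒯, hx⟩ := mem_filter.1 hS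
    rcases mem_spiderCore.1 hx with rfl | ⟨i, j, hj, hjx⟩
    · exact mem_union_left _ (mem_filter.2 ⟨hS𝒯, rfl⟩)
    · rw [hlen S hS𝒯 i] at hj
      exact mem_union_right _ (mem_biUnion.2 ⟨i, mem_univ i,
        mem_biUnion.2 ⟨j, hj, mem_filter.2 ⟨hS𝒯, hjx⟩⟩⟩)
  refine (card_le_card hsub).trans ((card_union_le _ _).trans ?_)
  gcongr
  exact card_biUnion_le.trans (sum_le_sum fun i _ => card_biUnion_le)

end Spiders

section AdmissibleSpiders

variable {V : Type*} {s : ℕ} {G : SimpleGraph V} {L : ℝ} {ℓv : Fin s → ℕ} {v : Fin s → V}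

def IsAdmissibleSpider (G : SimpleGraph V) (L : ℝ) (ℓv : Fin s → ℕ) (v : Fin s → V)
    (S : V × (Fin s → List V)) : Prop :=
  (∀ i, (S.2 i).length = ℓv i + 1) ∧ (∀ i, (S.2 i).getLast? = some (v i)) ∧
    SpiderAdmissible G L S

namespace IsAdmissibleSpider

variable {S : V × (Fin s → List V)} (h : IsAdmissibleSpider G L ℓv v S)
include h

lemma legLen_eq (i : Fin s) : legLen S i = ℓv i := by
  simp [legLen, h.1 i]

lemma sum_legLen : ∑ i, legLen S i = ∑ i, ℓv i :=
  sum_congr rfl fun i _ => h.legLen_eq i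

lemma spiderShape : SpiderShape G S := h.2.2.1

lemma head?_leg (i : Fin s) : (S.2 i).head? = some S.1 := (h.spiderShape.1 i).2

lemma pathGood_leg (hL : 1 ≤ L) (i : Fin s) : PathGood G L (S.2 i) := by
  obtain ⟨-, -, -, hone | ⟨hlegs, -⟩⟩ := h.2.2
  · refine pathGood_of_length_eq_two hL (h.spiderShape.1 i).1 ?_
    have := hone i
    rw [h.legLen_eq] at this
    rw [h.1 i, this]
  · exact hlegs i

lemma spiderGoodAux_truncLeg {i : Fin s} {j : ℕ} (hj : 1 ≤ j) (hjℓ : j < ℓv i) :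
    spiderGoodAux G L (∑ i, ℓv i - (ℓv i - j) + 1) (∑ i, ℓv i - (ℓv i - j))
      (truncLeg S i j) := by
  have hadm : spiderAdmWith G (PathGood G L) (fun m T => spiderGoodAux G L (m + 1) m T)
      (∑ i, ℓv i) S := h.sum_legLen ▸ h.2.2
  have hℓi : ℓv i ≤ ∑ i, ℓv i := single_le_sum (fun _ _ => Nat.zero_le _) (mem_univ i)
  obtain ⟨-, -, -, hone | ⟨-, htrunc⟩⟩ := hadm
  · have := hone i
    rw [h.legLen_eq] at this
    omega
  · exact htrunc i j hj (by rwa [h.legLen_eq]) _ (by omega) (by rw [h.legLen_eq])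

end IsAdmissibleSpider

variable [Finite V]

lemma card_le_fJ_of_spiderGoodAux (hL : 1 ≤ L) {fuel n : ℕ}
    {𝒮 : Finset (V × (Fin s → List V))} {len : Fin s → ℕ} {last : Fin s → Option V}
    (h : ∀ T ∈ 𝒮, spiderGoodAux G L (fuel + 1) n T ∧ (∀ i, (T.2 i).length = len i) ∧
      ∀ i, (T.2 i).getLast? = last i) :
    (#𝒮 : ℝ) ≤ fJ L n := by
  refine card_le_of_forall_subset_ncard_le (fJ_nonneg hL n) fun T hT => ⟨?_, ?_, (h T hT).1.2⟩
  · intro R hR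
    obtain ⟨hgood, hlen, hlast⟩ := h R hR
    exact ⟨hgood.1, fun i => by rw [hlen, (h T hT).2.1], fun i => by rw [hlast, (h T hT).2.2]⟩
  · exact (finite_setOf_length_snd_eq fun i => (T.2 i).length).subset fun R hR => hR.2.1

variable [DecidableEq V] {𝒯 : Finset (V × (Fin s → List V))}

/-- A spider is determined by its centre and its legs, and each leg lies in a class of at
most `f(ℓᵢ, L)` admissible paths with the same ends. -/
lemma card_filter_fst_eq_le (hL : 1 ≤ L) (h𝒯 : ∀ S ∈ 𝒯, IsAdmissibleSpider G L ℓv v S)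
    (x : V) : (#{S ∈ 𝒯 | S.1 = x} : ℝ) ≤ ∏ i, fJ L (ℓv i) := by
  set 𝒮 := {S ∈ 𝒯 | S.1 = x}
  have hinj : #𝒮 ≤ #(Fintype.piFinset fun i => 𝒮.image fun S => S.2 i) := by
    refine card_le_card_of_injOn (fun S => S.2) (fun S hS => ?_) fun S hS T hT hST => ?_
    · exact Fintype.mem_piFinset.2 fun i => mem_image_of_mem _ hS
    · exact Prod.ext ((mem_filter.1 hS).2.trans (mem_filter.1 hT).2.symm) hST
  rw [Fintype.card_piFinset] at hinj
  refine (Nat.cast_le.2 hinj).trans ?_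
  push_cast
  refine prod_le_prod (fun _ _ => Nat.cast_nonneg _) fun i _ => ?_
  refine card_le_fJ_of_pathGoodAux (G := G) (fuel := ℓv i) hL (a := some x) (b := some (v i))
    (forall_mem_image.2 fun S hS => ?_)
  obtain ⟨hS𝒯, rfl⟩ := mem_filter.1 hS
  have hA := h𝒯 S hS𝒯
  exact ⟨(hA.pathGood_leg hL i).pathGoodAux_succ (hA.1 i), hA.head?_leg i, hA.2.1 i⟩

/-- A spider whose `i`-th leg passes through `x` at position `j` is determined by its
truncation at `x` (an `L`-good spider) and the rest of the leg (an `L`-good path from `x`). -/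
lemma card_filter_getElem?_eq_le (hL : 1 ≤ L) (h𝒯 : ∀ S ∈ 𝒯, IsAdmissibleSpider G L ℓv v S)
    (x : V) {i : Fin s} {j : ℕ} (hj : 1 ≤ j) (hjℓ : j < ℓv i) :
    (#{S ∈ 𝒯 | (S.2 i)[j]? = some x} : ℝ) ≤
      fJ L (∑ i, ℓv i - (ℓv i - j)) * fJ L (ℓv i - j) := by
  set 𝒮 := {S ∈ 𝒯 | (S.2 i)[j]? = some x}
  have hinj : #𝒮 ≤ #(𝒮.image (truncLeg · i j) ×ˢ 𝒮.image fun S => (S.2 i).drop j) :=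
    card_le_card_of_injOn (fun S => (truncLeg S i j, (S.2 i).drop j))
      (fun S hS => mem_product.2 ⟨mem_image_of_mem _ hS, mem_image_of_mem _ hS⟩)
      fun S _ T _ hST => eq_of_truncLeg_eq_of_drop_eq (congrArg Prod.fst hST)
        (congrArg Prod.snd hST)
  rw [card_product] at hinj
  have htrunc : (#(𝒮.image (truncLeg · i j)) : ℝ) ≤ fJ L (∑ i, ℓv i - (ℓv i - j)) := by
    refine card_le_fJ_of_spiderGoodAux (G := G) (fuel := ∑ i, ℓv i - (ℓv i - j)) hL
      (len := fun i' => if i' = i then j + 1 else ℓv i' + 1)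
      (last := fun i' => if i' = i then some x else some (v i'))
      (forall_mem_image.2 fun S hS => ?_)
    obtain ⟨hS𝒯, hx⟩ := mem_filter.1 hS
    have hA := h𝒯 S hS𝒯
    refine ⟨hA.spiderGoodAux_truncLeg hj hjℓ, fun i' => ?_, fun i' => ?_⟩ <;>
      rcases eq_or_ne i' i with rfl | hi'
    · simp [truncLeg, hA.1 i']
      omega
    · simp [truncLeg, hA.1 i', hi']
    · simp only [truncLeg, Function.update_self, if_pos]
      rw [List.getLast?_take_succ (by rw [hA.1 i']; omega), hx]
    · simp [truncLeg, hA.2.1 i', hi']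
  have hdrop : (#(𝒮.image fun S => (S.2 i).drop j) : ℝ) ≤ fJ L (ℓv i - j) := by
    refine card_le_fJ_of_pathGoodAux (G := G) (fuel := ℓv i - 1) hL (a := some x)
      (b := some (v i)) (forall_mem_image.2 fun S hS => ?_)
    obtain ⟨hS𝒯, hx⟩ := mem_filter.1 hS
    have hA := h𝒯 S hS𝒯
    have hgood := (hA.pathGood_leg hL i).pathGoodAux_drop (n := ℓv i - 1)
      (by rw [hA.1 i]; omega) hj (by omega)
    rw [show ℓv i - 1 + 1 = ℓv i by omega] at hgood ⊢
    refine ⟨hgood, by rwa [List.head?_drop], ?_⟩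
    rw [List.getLast?_drop, if_neg (by rw [hA.1 i]; omega), hA.2.1 i]
  calc (#𝒮 : ℝ) ≤ #(𝒮.image (truncLeg · i j)) * #(𝒮.image fun S => (S.2 i).drop j) := by
        exact_mod_cast hinj
    _ ≤ _ := mul_le_mul htrunc hdrop (Nat.cast_nonneg _) (fJ_nonneg hL _)

lemma card_filter_mem_spiderCore_le (hL : 1 ≤ L) (hs : 2 ≤ s) (hℓ : ∀ i, 1 ≤ ℓv i)
    (h𝒯 : ∀ S ∈ 𝒯, IsAdmissibleSpider G L ℓv v S) (x : V) :
    (#{S ∈ 𝒯 | x ∈ spiderCore S} : ℝ) ≤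
      ((∑ i, ℓv i - 1 : ℕ) : ℝ) * fJPairMax L (∑ i, ℓv i) := by
  set M := fJPairMax L (∑ i, ℓv i)
  have hℓi : ∀ i, ℓv i ≤ ∑ i, ℓv i := fun i =>
    single_le_sum (fun _ _ => Nat.zero_le _) (mem_univ i)
  have hcentre : (#{S ∈ 𝒯 | S.1 = x} : ℝ) ≤ M := by
    let i₀ : Fin s := ⟨0, by omega⟩
    have hi₁ : (⟨1, by omega⟩ : Fin s) ∈ univ.erase i₀ :=
      mem_erase.2 ⟨by simp [i₀, Fin.ext_iff], mem_univ _⟩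
    have hrest : 1 ≤ ∑ i ∈ univ.erase i₀, ℓv i :=
      (hℓ _).trans (single_le_sum (fun _ _ => Nat.zero_le _) hi₁)
    calc (#{S ∈ 𝒯 | S.1 = x} : ℝ) ≤ ∏ i, fJ L (ℓv i) := card_filter_fst_eq_le hL h𝒯 x
      _ = fJ L (ℓv i₀) * ∏ i ∈ univ.erase i₀, fJ L (ℓv i) := (mul_prod_erase _ _ (mem_univ _)).symm
      _ ≤ fJ L (ℓv i₀) * fJ L (∑ i ∈ univ.erase i₀, ℓv i) :=
          mul_le_mul_of_nonneg_left (prod_fJ_le_fJ_sum hL _ ⟨_, hi₁⟩ fun i _ => hℓ i)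
            (fJ_nonneg hL _)
      _ ≤ M := fJ_mul_le_fJPairMax L (hℓ i₀) hrest (add_sum_erase _ _ (mem_univ _))
  have hinner : ∀ i, ∀ j ∈ Ico 1 (ℓv i), (#{S ∈ 𝒯 | (S.2 i)[j]? = some x} : ℝ) ≤ M := by
    intro i j hj
    obtain ⟨hj1, hjℓ⟩ := mem_Ico.1 hj
    exact (card_filter_getElem?_eq_le hL h𝒯 x hj1 hjℓ).trans
      (fJ_mul_le_fJPairMax L (by have := hℓi i; omega) (by omega) (by have := hℓi i; omega))
  calc (#{S ∈ 𝒯 | x ∈ spiderCore S} : ℝ)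
      ≤ #{S ∈ 𝒯 | S.1 = x} + ∑ i, ∑ j ∈ Ico 1 (ℓv i), (#{S ∈ 𝒯 | (S.2 i)[j]? = some x} : ℝ) := by
        exact_mod_cast card_filter_mem_spiderCore_le_sum
          (fun S hS => (h𝒯 S hS).legLen_eq) x
    _ ≤ M + ∑ i, ∑ _j ∈ Ico 1 (ℓv i), M :=
        add_le_add hcentre (sum_le_sum fun i _ => sum_le_sum (hinner i))
    _ = ((1 + ∑ i, (ℓv i - 1) : ℕ) : ℝ) * M := by simp [add_mul, sum_mul]
    _ ≤ ((∑ i, ℓv i - 1 : ℕ) : ℝ) * M := by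
        gcongr
        · exact fJPairMax_nonneg hL _
        · exact one_add_sum_sub_one_le (by simpa using hs) hℓ

end AdmissibleSpiders

theorem disjoint_spiders_general (s k : ℕ) (hs : 2 ≤ s) (ℓv : Fin s → ℕ)
    (hℓ : ∀ i, 1 ≤ ℓv i ∧ ℓv i ≤ k) (L : ℝ) (hL : 1 ≤ L)
    (V : Type v) [Fintype V] (G : SimpleGraph V) (v : Fin s → V)
    (𝒯 : Finset (V × (Fin s → List V)))
    (h𝒯 : ∀ S ∈ 𝒯, (∀ i, (S.2 i).length = ℓv i + 1) ∧
      (∀ i, (S.2 i).getLast? = some (v i)) ∧ SpiderAdmissible G L S)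
    (hcard : fJ L (∑ i, ℓv i) / 2 ≤ (𝒯.card : ℝ)) :
    ∃ 𝒟 ⊆ 𝒯, fJ L ((∑ i, ℓv i) - 1) ^ 16 / 2 ≤ (𝒟.card : ℝ) ∧
      ∀ S ∈ 𝒟, ∀ T ∈ 𝒟, S ≠ T →
        ∀ x : V, (∃ i, x ∈ S.2 i) → (∃ i, x ∈ T.2 i) → ∃ i, x = v i := by
  classical
  have hℓ₁ : ∀ i, 1 ≤ ℓv i := fun i => (hℓ i).1
  have h𝒯' : ∀ S ∈ 𝒯, IsAdmissibleSpider G L ℓv v S := h𝒯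
  have hcoreCard := one_add_sum_sub_one_le (by simpa using hs) hℓ₁
  obtain ⟨𝒟, h𝒟𝒯, hdisj, hcount⟩ := exists_pairwiseDisjoint_card_le 𝒯 spiderCore
    (∑ i, ℓv i - 1) _ (fun S _ => ⟨S.1, mem_insert_self _ _⟩)
    (fun S hS => (card_spiderCore_le S).trans
      (by simpa [(h𝒯' S hS).legLen_eq] using hcoreCard))
    (card_filter_mem_spiderCore_le hL hs hℓ₁ h𝒯')
  refine ⟨𝒟, h𝒟𝒯, ?_, fun S hS T hT hST x ⟨i, hxS⟩ ⟨i', hxT⟩ => ?_⟩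
  · by_contra! hsmall
    have hC : 0 ≤ ((∑ i, ℓv i - 1 : ℕ) : ℝ) ^ 2 * fJPairMax L (∑ i, ℓv i) :=
      mul_nonneg (sq_nonneg _) (fJPairMax_nonneg hL _)
    have := mul_le_mul_of_nonneg_right hsmall.le hC
    rw [fJ_eq L (by omega)] at hcard
    nlinarith
  · by_contra! hx
    have hcore : ∀ R ∈ 𝒟, ∀ {i}, x ∈ R.2 i → x ∈ spiderCore R := fun R hR i hxR =>
      mem_spiderCore_of_mem_leg ((h𝒯' R (h𝒟𝒯 hR)).head?_leg i) hxR
        (by rw [(h𝒯' R (h𝒟𝒯 hR)).2.1 i]; exact fun h => hx i (Option.some_injective _ h).symm)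
    exact disjoint_left.1 (hdisj hS hT hST) (hcore S hS hxS) (hcore T hT hxT)

/-- Lemma 3.3: given at least `f(ℓ, L)/2` `L`-admissible spiders with
length vector `ℓv` and leaf vector `v`, among them there are at least `f(ℓ-1, L)^16 / 2`
spiders which are pairwise vertex-disjoint apart from their leaves. -/
theorem disjoint_spiders (s k : ℕ) (hs : 2 ≤ s) (hk : 2 ≤ k) (ℓv : Fin s → ℕ)
    (hℓ : ∀ i, 1 ≤ ℓv i ∧ ℓv i ≤ k) (L : ℝ) (hL : 1 ≤ L)
    (V : Type v) [Fintype V] (G : SimpleGraph V) (v : Fin s → V)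
    (𝒯 : Finset (V × (Fin s → List V)))
    (h𝒯 : ∀ S ∈ 𝒯, (∀ i, (S.2 i).length = ℓv i + 1) ∧
      (∀ i, (S.2 i).getLast? = some (v i)) ∧ SpiderAdmissible G L S)
    (hcard : fJ L (∑ i, ℓv i) / 2 ≤ (𝒯.card : ℝ)) :
    ∃ 𝒟 ⊆ 𝒯, fJ L ((∑ i, ℓv i) - 1) ^ 16 / 2 ≤ (𝒟.card : ℝ) ∧
      ∀ S ∈ 𝒟, ∀ T ∈ 𝒟, S ≠ T →
        ∀ x : V, (∃ i, x ∈ S.2 i) → (∃ i, x ∈ T.2 i) → ∃ i, x = v i :=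
  disjoint_spiders_general s k hs ℓv hℓ L hL V G v 𝒯 h𝒯 hcard

end ExtremalSubdivision
end
end

section
/- Let s ≥ 2 and k ≥ 1 be integers, and let F be the s-legged spider with length vector (k,k,…,k), viewed as a rooted graph whose roots are its s leaves. Then F is balanced and ρ(F) = sk/(s(k−1)+1). -/
open Finset Filter

noncomputable section

namespace ExtremalSubdivision

universe u

/-!
Each edge of the spider is named by its outer endpoint, so vertices and edges are counted leg by
leg. A nonempty set `S` of non-roots with `c ∈ {0,1}` centres and `M` leg vertices, lying on `t`
legs, touches at least `M + t` edges: on each leg it meets, the edge beyond its outermost vertex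
(which is not the leaf) is extra, and if `S` contains the centre then `t = s`, each leg gaining
its first edge. Since `M ≤ t(k-1)`, elementary algebra gives
`(M + t)/(c + M) ≥ sk/(s(k-1)+1)`, with equality when `S` is the set of all non-roots.
-/

namespace SpiderGraph

open scoped Classical

variable {s : ℕ} {kk : Fin s → ℕ}

lemma spiderVtx_zero (i : Fin s) : spiderVtx kk i 0 = Sum.inl () := by
  simp [spiderVtx]

lemma spiderVtx_succ (i : Fin s) (b : Fin (kk i)) :
    spiderVtx kk i (b + 1) = Sum.inr ⟨i, b⟩ := by
  simp [spiderVtx, Nat.succ_le_of_lt b.2]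

lemma spiderVtx_eq_inr_iff {i : Fin s} {a : ℕ} {x : Σ i, Fin (kk i)} :
    spiderVtx kk i a = Sum.inr x ↔ x.1 = i ∧ a = x.2 + 1 := by
  constructor
  · intro h
    unfold spiderVtx at h
    split_ifs at h with ha
    cases h
    exact ⟨rfl, by dsimp only; omega⟩
  · rintro ⟨rfl, rfl⟩
    exact spiderVtx_succ _ _

/-- The edge of leg `p.1` joining its vertices at distance `p.2` and `p.2 + 1` from the centre. -/
def spiderEdge (p : Σ i, Fin (kk i)) : Sym2 (SpiderVtx s kk) :=
  s(spiderVtx kk p.1 p.2, Sum.inr p)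

lemma spiderEdge_injective : Function.Injective (spiderEdge (kk := kk)) := by
  intro p q h
  rcases Sym2.eq_iff.mp h with ⟨-, h⟩ | ⟨hp, hq⟩
  · exact Sum.inr_injective h
  · obtain ⟨-, h₁⟩ := spiderVtx_eq_inr_iff.mp hp
    obtain ⟨-, h₂⟩ := spiderVtx_eq_inr_iff.mp hq.symm
    omega

lemma edgeSet_eq_range_spiderEdge : (SpiderGraph s kk).edgeSet = Set.range spiderEdge := by
  ext e
  induction e using Sym2.ind with
  | _ x y =>
    have hne (p : Σ i, Fin (kk i)) : spiderVtx kk p.1 p.2 ≠ Sum.inr p := fun h => by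
      have := (spiderVtx_eq_inr_iff.mp h).2; omega
    simp only [SimpleGraph.mem_edgeSet, SpiderGraph, SimpleGraph.fromRel_adj, Set.mem_range,
      spiderEdge]
    constructor
    · rintro ⟨-, ⟨i, a, ha, rfl, rfl⟩ | ⟨i, a, ha, rfl, rfl⟩⟩
      · exact ⟨⟨i, a, ha⟩, by rw [← spiderVtx_succ i ⟨a, ha⟩]⟩
      · exact ⟨⟨i, a, ha⟩, by rw [← spiderVtx_succ i ⟨a, ha⟩, Sym2.eq_swap]⟩
    · rintro ⟨p, hp⟩
      rcases Sym2.eq_iff.mp hp with ⟨rfl, rfl⟩ | ⟨rfl, rfl⟩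
      · exact ⟨hne p, Or.inl ⟨p.1, p.2, p.2.2, rfl, (spiderVtx_succ _ _).symm⟩⟩
      · exact ⟨(hne p).symm, Or.inr ⟨p.1, p.2, p.2.2, rfl, (spiderVtx_succ _ _).symm⟩⟩

/-- The vertices of `S` on leg `i`; the index `b` stands for the vertex at distance `b + 1`
from the centre. -/
def legVertsIn (S : Set (SpiderVtx s kk)) (i : Fin s) : Finset (Fin (kk i)) :=
  {b | Sum.inr ⟨i, b⟩ ∈ S}

/-- The edges of leg `i` touching `S`, indexed as in `spiderEdge`. -/
def legEdgesTouching (S : Set (SpiderVtx s kk)) (i : Fin s) : Finset (Fin (kk i)) :=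
  {a | spiderVtx kk i a ∈ S ∨ Sum.inr ⟨i, a⟩ ∈ S}

lemma ncard_eq_centre_add_sum_legVertsIn (S : Set (SpiderVtx s kk)) :
    S.ncard = (if Sum.inl () ∈ S then 1 else 0) + ∑ i, #(legVertsIn S i) := by
  rw [Set.ncard_eq_toFinset_card', ← Set.filter_mem_univ_eq_toFinset, Finset.card_filter,
    Fintype.sum_sum_type, Fintype.sum_sigma]
  simp only [legVertsIn, Finset.card_filter, Finset.univ_unique, Finset.sum_singleton]

lemma edgesTouching_eq_sum_legEdgesTouching (S : Set (SpiderVtx s kk)) :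
    edgesTouching (SpiderGraph s kk) S = ∑ i, #(legEdgesTouching S i) := by
  have : {e ∈ (SpiderGraph s kk).edgeSet | ∃ x ∈ S, x ∈ e} =
      spiderEdge '' {p | spiderVtx kk p.1 p.2 ∈ S ∨ Sum.inr p ∈ S} := by
    ext e
    simp only [edgeSet_eq_range_spiderEdge, Set.mem_image, Set.mem_range]
    constructor
    · rintro ⟨⟨p, rfl⟩, x, hx, hxe⟩
      exact ⟨p, by rcases Sym2.mem_iff.mp hxe with rfl | rfl <;> simp [hx], rfl⟩
    · rintro ⟨p, hp, rfl⟩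
      refine ⟨⟨p, rfl⟩, ?_⟩
      rcases hp with hp | hp <;> exact ⟨_, hp, by simp [spiderEdge]⟩
  rw [edgesTouching, this, Set.ncard_image_of_injective _ spiderEdge_injective,
    Set.ncard_eq_toFinset_card', ← Set.filter_mem_univ_eq_toFinset, Finset.card_filter,
    Fintype.sum_sigma]
  simp only [legEdgesTouching, Finset.card_filter, Set.mem_ofPred_eq]

lemma inr_mem_spiderRoots_iff {x : Σ i, Fin (kk i)} :
    Sum.inr x ∈ spiderRoots s kk ↔ (x.2 : ℕ) + 1 = kk x.1 := by
  constructor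
  · rintro ⟨i, hi⟩
    obtain ⟨rfl, h⟩ := spiderVtx_eq_inr_iff.mp hi
    exact h.symm
  · intro h
    exact ⟨x.1, spiderVtx_eq_inr_iff.mpr ⟨rfl, h.symm⟩⟩

lemma inl_notMem_spiderRoots (hkk : ∀ i, 1 ≤ kk i) : Sum.inl () ∉ spiderRoots s kk := by
  rintro ⟨i, hi⟩
  simp [spiderVtx, hkk i] at hi

lemma spiderVtx_notMem_spiderRoots (hkk : ∀ i, 1 ≤ kk i) {i : Fin s} {a : ℕ} (ha : a < kk i) :
    spiderVtx kk i a ∉ spiderRoots s kk := by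
  cases a with
  | zero => rw [spiderVtx_zero]; exact inl_notMem_spiderRoots hkk
  | succ b =>
    rw [spiderVtx_succ i ⟨b, by omega⟩, inr_mem_spiderRoots_iff]
    simp only
    omega

lemma card_filter_val_add_one_ne (n : ℕ) : #{b : Fin n | (b : ℕ) + 1 ≠ n} = n - 1 := by
  cases n with
  | zero => simp
  | succ n =>
    have : ({b : Fin (n + 1) | (b : ℕ) + 1 ≠ n + 1} : Finset _) = univ.erase (Fin.last n) := by
      ext b; simp [Fin.ext_iff]
    rw [this, card_erase_of_mem (mem_univ _)]
    simp

lemma rhoTop_eq (hkk : ∀ i, 1 ≤ kk i) :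
    rhoTop (SpiderGraph s kk) (spiderRoots s kk) =
      ((∑ i, kk i : ℕ) : ℝ) / ((∑ i, (kk i - 1) + 1 : ℕ) : ℝ) := by
  have hE : edgesTouching (SpiderGraph s kk) (spiderRoots s kk)ᶜ = ∑ i, kk i := by
    rw [edgesTouching_eq_sum_legEdgesTouching]
    refine Finset.sum_congr rfl fun i _ => ?_
    have h (a : Fin (kk i)) : spiderVtx kk i a ∈ (spiderRoots s kk)ᶜ :=
      spiderVtx_notMem_spiderRoots hkk a.2
    simp only [legEdgesTouching, h, true_or, Finset.filter_true, card_univ, Fintype.card_fin]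
  have hV : (spiderRoots s kk)ᶜ.ncard = ∑ i, (kk i - 1) + 1 := by
    rw [ncard_eq_centre_add_sum_legVertsIn, if_pos (Set.mem_compl (inl_notMem_spiderRoots hkk)),
      add_comm]
    congr 1
    refine Finset.sum_congr rfl fun i _ => ?_
    simp only [legVertsIn, Set.mem_compl_iff, inr_mem_spiderRoots_iff]
    exact card_filter_val_add_one_ne _
  rw [rhoTop, rho, hE, hV]

lemma legVertsIn_subset_legEdgesTouching (S : Set (SpiderVtx s kk)) (i : Fin s) :
    legVertsIn S i ⊆ legEdgesTouching S i := fun b hb => by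
  simp only [legVertsIn, legEdgesTouching, Finset.mem_filter, mem_univ, true_and] at hb ⊢
  exact Or.inr hb

variable {S : Set (SpiderVtx s kk)}

lemma val_add_one_ne_of_mem_legVertsIn (hS : S ⊆ (spiderRoots s kk)ᶜ) {i : Fin s}
    {b : Fin (kk i)} (hb : b ∈ legVertsIn S i) : (b : ℕ) + 1 ≠ kk i := fun h =>
  hS ((Finset.mem_filter.mp hb).2) (inr_mem_spiderRoots_iff.mpr h)

lemma card_legVertsIn_le (hS : S ⊆ (spiderRoots s kk)ᶜ) (i : Fin s) :
    #(legVertsIn S i) ≤ kk i - 1 :=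
  calc #(legVertsIn S i) ≤ #{b : Fin (kk i) | (b : ℕ) + 1 ≠ kk i} :=
        card_le_card fun b hb => by simpa using val_add_one_ne_of_mem_legVertsIn hS hb
    _ = kk i - 1 := card_filter_val_add_one_ne _

/-- A leg met by `S`, or any leg when `S` contains the centre, has one more edge touching `S`
than vertices in `S`: the edge beyond the outermost vertex of `S` on it (which is not the leaf),
or the edge at the centre. -/
lemma card_legVertsIn_lt (hS : S ⊆ (spiderRoots s kk)ᶜ) {i : Fin s}
    (h : Sum.inl () ∈ S ∨ (legVertsIn S i).Nonempty) :
    #(legVertsIn S i) < #(legEdgesTouching S i) := by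
  refine card_lt_card ((ssubset_iff_of_subset (legVertsIn_subset_legEdgesTouching S i)).mpr ?_)
  rcases (legVertsIn S i).eq_empty_or_nonempty with hA | hA
  · have hc : Sum.inl () ∈ S := h.resolve_right (by simp [hA])
    have hi : 0 < kk i := Nat.pos_of_ne_zero fun h0 =>
      hS hc ⟨i, by simp only [h0, spiderVtx_zero]⟩
    refine ⟨⟨0, hi⟩, ?_, by simp [hA]⟩
    simp [legEdgesTouching, spiderVtx_zero, hc]
  · set m := (legVertsIn S i).max' hA
    have hm : m ∈ legVertsIn S i := max'_mem _ hA
    have hlt : (m : ℕ) + 1 < kk i :=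
      lt_of_le_of_ne m.2 (val_add_one_ne_of_mem_legVertsIn hS hm)
    refine ⟨⟨m + 1, hlt⟩, ?_, fun hA' => ?_⟩
    · simp only [legEdgesTouching, Finset.mem_filter, mem_univ, true_and]
      exact Or.inl (by simpa [spiderVtx_succ] using (Finset.mem_filter.mp hm).2)
    · exact (le_max' _ _ hA').not_gt (Fin.lt_def.mpr (Nat.lt_succ_self _))

lemma sum_card_legVertsIn_add_card_le_edgesTouching (hS : S ⊆ (spiderRoots s kk)ᶜ) :
    ∑ i, #(legVertsIn S i) + #{i | Sum.inl () ∈ S ∨ (legVertsIn S i).Nonempty} ≤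
      edgesTouching (SpiderGraph s kk) S := by
  rw [edgesTouching_eq_sum_legEdgesTouching, card_filter, ← sum_add_distrib]
  refine sum_le_sum fun i _ => ?_
  split_ifs with h
  · exact card_legVertsIn_lt hS h
  · simpa using card_le_card (legVertsIn_subset_legEdgesTouching S i)

lemma sum_card_legVertsIn_le (hS : S ⊆ (spiderRoots s kk)ᶜ) :
    ∑ i, #(legVertsIn S i) ≤
      ∑ i with Sum.inl () ∈ S ∨ (legVertsIn S i).Nonempty, (kk i - 1) := by
  rw [← sum_filter_of_ne (p := fun i => Sum.inl () ∈ S ∨ (legVertsIn S i).Nonempty)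
    fun i _ h => Or.inr (card_pos.mp (Nat.pos_of_ne_zero h))]
  exact sum_le_sum fun i _ => card_legVertsIn_le hS i

/-- With `c = [centre ∈ S]`, `M` leg vertices in `S` spread over `t` legs (all `s` legs when
`c = 1`), the cross-multiplied form of `sk / (s(k-1)+1) ≤ (M + t) / (c + M)`. -/
lemma density_cross_mul_le {s k c M t : ℕ} (hM : M ≤ t * (k - 1))
    (hc : c = 0 ∨ c = 1 ∧ t = s) :
    s * k * (c + M) ≤ (M + t) * (s * (k - 1) + 1) := by
  rcases k with _ | k
  · simp
  · simp only [Nat.add_sub_cancel] at hM ⊢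
    rcases hc with rfl | ⟨rfl, rfl⟩
    · nlinarith
    · rcases t with _ | t
      · simp_all
      · nlinarith [Nat.mul_le_mul_left t hM]

variable {k : ℕ}

lemma rhoTop_const (hk : 1 ≤ k) :
    rhoTop (SpiderGraph s fun _ => k) (spiderRoots s fun _ => k) =
      ((s * k : ℕ) : ℝ) / ((s * (k - 1) + 1 : ℕ) : ℝ) := by
  simpa using rhoTop_eq (s := s) fun _ => hk

lemma isBalanced_const (hk : 1 ≤ k) :
    IsBalanced (SpiderGraph s fun _ => k) (spiderRoots s fun _ => k) := by
  intro S hS hne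
  set U : Finset (Fin s) := {i | Sum.inl () ∈ S ∨ (legVertsIn S i).Nonempty}
  have hE := sum_card_legVertsIn_add_card_le_edgesTouching hS
  have hM : ∑ i, #(legVertsIn S i) ≤ #U * (k - 1) := by
    simpa using sum_card_legVertsIn_le hS
  have hc : (if Sum.inl () ∈ S then 1 else 0) = 0 ∨
      (if Sum.inl () ∈ S then 1 else 0) = 1 ∧ #U = s := by
    split_ifs with h <;> simp [U, h]
  have hS₀ : 0 < S.ncard := (Set.ncard_pos S.toFinite).mpr hne
  rw [rhoTop_const hk, rho, div_le_div_iff₀ (by positivity) (by exact_mod_cast hS₀),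
    ncard_eq_centre_add_sum_legVertsIn]
  exact_mod_cast (density_cross_mul_le hM hc).trans (Nat.mul_le_mul_right _ hE)

end SpiderGraph

theorem spider_balanced_and_rho_general (s k : ℕ) (hk : 1 ≤ k) :
    IsBalanced (SpiderGraph s fun _ => k) (spiderRoots s fun _ => k) ∧
      rhoTop (SpiderGraph s fun _ => k) (spiderRoots s fun _ => k) =
        ((s * k : ℕ) : ℝ) / ((s * (k - 1) + 1 : ℕ) : ℝ) :=
  ⟨SpiderGraph.isBalanced_const hk, SpiderGraph.rhoTop_const hk⟩

/-- the `s`-legged spider with length vector `(k, …, k)`, rooted at its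
leaves, is balanced, and `ρ(F) = sk / (s(k-1) + 1)`. -/
theorem spider_balanced_and_rho (s k : ℕ) (hs : 2 ≤ s) (hk : 1 ≤ k) :
    IsBalanced (SpiderGraph s fun _ => k) (spiderRoots s fun _ => k) ∧
      rhoTop (SpiderGraph s fun _ => k) (spiderRoots s fun _ => k) =
        ((s * k : ℕ) : ℝ) / ((s * (k - 1) + 1 : ℕ) : ℝ) :=
  spider_balanced_and_rho_general s k hk

end ExtremalSubdivision
end
end

section
/- Let s ≥ 2 and k_1,…,k_s ≥ 1 be integers, and let F be the s-legged spider with length vector (k_1,…,k_s), viewed as a rooted graph whose roots are its s leaves. Then F is balanced if and only if k_1 + … + k_s ≥ (s−1) · max_{1 ≤ i ≤ s} k_i. -/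
open Finset Filter

noncomputable section

namespace ExtremalSubdivision

universe u

/-!
Every edge of the spider has an endpoint that is not a leaf, so with `K = ∑ kᵢ` we get
`ρ(F) = K / (K + 1 - s)`. The interior of a longest leg, of length `k`, has density `k / (k - 1)`,
and `K / (K + 1 - s) ≤ k / (k - 1)` is exactly `(s - 1) k ≤ K`.

Conversely let `S` be a nonempty set of `n` non-leaves. Each vertex of `S` other than the centre
owns the edge leaving it away from the centre, and the centre owns its `s` edges. If the centre
lies in `S`, this gives `e_S ≥ n - 1 + s`, which suffices because `n ≤ K + 1 - s`. Otherwise every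
leg meeting `S` also has an edge entering `S` from the centre side, while a leg holds at most
`k - 1` vertices of `S`; so `e_S ≥ n + n / (k - 1)`, i.e. `ρ(S) ≥ k / (k - 1) ≥ ρ(F)`.
-/

theorem isBalanced_iff_forall_mul_le {W : Type*} [Finite W] {F : SimpleGraph W} {R : Set W}
    (hR : Rᶜ.Nonempty) :
    IsBalanced F R ↔ ∀ S ⊆ Rᶜ, S.Nonempty →
      edgesTouching F Rᶜ * S.ncard ≤ edgesTouching F S * Rᶜ.ncard := by
  refine forall₂_congr fun S _ => imp_congr_right fun hS => ?_
  rw [rhoTop, rho, rho, div_le_div_iff₀ (by exact_mod_cast hR.ncard_pos)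
    (by exact_mod_cast hS.ncard_pos)]
  exact_mod_cast Iff.rfl

theorem sigma_fin_ext {ι : Type*} {n : ι → ℕ} {p q : Σ i, Fin (n i)} (h : p.1 = q.1)
    (h' : p.2.val = q.2.val) : p = q := by
  obtain ⟨i, b⟩ := p
  obtain ⟨j, c⟩ := q
  subst h
  exact congrArg _ (Fin.ext h')

section Spider

variable {s : ℕ} {kv : Fin s → ℕ}

theorem spiderVtx_zero (i : Fin s) : spiderVtx kv i 0 = Sum.inl () := by
  simp [spiderVtx]

theorem spiderVtx_of_pos {i : Fin s} {a : ℕ} (ha : 0 < a) (hai : a ≤ kv i) :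
    spiderVtx kv i a = Sum.inr ⟨i, ⟨a - 1, by omega⟩⟩ :=
  dif_pos ⟨ha, hai⟩

theorem spiderVtx_eq_inr_iff {i : Fin s} {a : ℕ} {q : Σ i, Fin (kv i)} :
    spiderVtx kv i a = Sum.inr q ↔ q.1 = i ∧ q.2.val + 1 = a := by
  obtain ⟨j, b⟩ := q
  unfold spiderVtx
  split_ifs with h
  · simp only [Sum.inr.injEq, Sigma.mk.inj_iff]
    constructor
    · rintro ⟨rfl, hb⟩
      have := (Fin.heq_ext_iff rfl).1 hb
      simp only at this
      omega
    · rintro ⟨rfl, hb⟩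
      exact ⟨rfl, (Fin.heq_ext_iff rfl).2 (by simp only; omega)⟩
  · simp only [false_iff]
    rintro ⟨rfl, rfl⟩
    exact h ⟨by omega, b.isLt⟩

theorem spiderVtx_succ (p : Σ i, Fin (kv i)) : spiderVtx kv p.1 (p.2.val + 1) = Sum.inr p := by
  rw [spiderVtx_eq_inr_iff]; simp

variable (kv) in
/-- The edges of the spider are indexed by its non-central vertices: `p` indexes the edge joining
`Sum.inr p` to its neighbour towards the centre, `innerEnd kv p`. -/
def innerEnd (p : Σ i, Fin (kv i)) : SpiderVtx s kv := spiderVtx kv p.1 p.2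

variable (kv) in
def legEdge (p : Σ i, Fin (kv i)) : Sym2 (SpiderVtx s kv) := s(innerEnd kv p, Sum.inr p)

theorem innerEnd_eq_inr_iff {p q : Σ i, Fin (kv i)} :
    innerEnd kv p = Sum.inr q ↔ q.1 = p.1 ∧ q.2.val + 1 = p.2.val :=
  spiderVtx_eq_inr_iff

theorem innerEnd_ne_inr (p : Σ i, Fin (kv i)) : innerEnd kv p ≠ Sum.inr p := by
  simp [innerEnd_eq_inr_iff]

theorem innerEnd_of_pos {p : Σ i, Fin (kv i)} (hp : 0 < p.2.val) :
    innerEnd kv p = Sum.inr ⟨p.1, ⟨p.2.val - 1, by omega⟩⟩ :=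
  spiderVtx_of_pos hp p.2.isLt.le

theorem innerEnd_of_eq_zero {p : Σ i, Fin (kv i)} (hp : p.2.val = 0) :
    innerEnd kv p = Sum.inl () := by
  rw [innerEnd, hp, spiderVtx_zero]

theorem edgeSet_spiderGraph : (SpiderGraph s kv).edgeSet = Set.range (legEdge kv) := by
  ext e
  induction e with
  | h x y =>
    simp only [SimpleGraph.mem_edgeSet, SpiderGraph, SimpleGraph.fromRel_adj, Set.mem_range,
      legEdge, Sym2.eq_iff]
    constructor
    · rintro ⟨-, ⟨i, a, ha, rfl, rfl⟩ | ⟨i, a, ha, rfl, rfl⟩⟩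
      · exact ⟨⟨i, ⟨a, ha⟩⟩, Or.inl ⟨rfl, (spiderVtx_succ ⟨i, ⟨a, ha⟩⟩).symm⟩⟩
      · exact ⟨⟨i, ⟨a, ha⟩⟩, Or.inr ⟨rfl, (spiderVtx_succ ⟨i, ⟨a, ha⟩⟩).symm⟩⟩
    · rintro ⟨p, ⟨rfl, rfl⟩ | ⟨rfl, rfl⟩⟩
      · exact ⟨innerEnd_ne_inr p, Or.inl ⟨p.1, p.2, p.2.isLt, rfl, (spiderVtx_succ p).symm⟩⟩
      · exact ⟨(innerEnd_ne_inr p).symm,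
          Or.inr ⟨p.1, p.2, p.2.isLt, rfl, (spiderVtx_succ p).symm⟩⟩

theorem legEdge_injective : Function.Injective (legEdge kv) := by
  intro p q h
  rcases Sym2.eq_iff.1 h with ⟨-, h⟩ | ⟨hpq, hqp⟩
  · exact Sum.inr_injective h
  · rw [innerEnd_eq_inr_iff] at hpq
    rw [eq_comm, innerEnd_eq_inr_iff] at hqp
    omega

theorem edgesTouching_spiderGraph (S : Set (SpiderVtx s kv)) :
    edgesTouching (SpiderGraph s kv) S = {p | innerEnd kv p ∈ S ∨ Sum.inr p ∈ S}.ncard := by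
  rw [edgesTouching, edgeSet_spiderGraph, ← Set.ncard_image_of_injective _ legEdge_injective]
  congr 1
  ext e
  simp only [Set.mem_range, Set.mem_image, Set.mem_ofPred_eq]
  constructor
  · rintro ⟨⟨p, rfl⟩, x, hx, hxe⟩
    rcases Sym2.mem_iff.1 hxe with rfl | rfl
    exacts [⟨p, Or.inl hx, rfl⟩, ⟨p, Or.inr hx, rfl⟩]
  · rintro ⟨p, hp | hp, rfl⟩
    exacts [⟨⟨p, rfl⟩, _, hp, Sym2.mem_mk_left _ _⟩, ⟨⟨p, rfl⟩, _, hp, Sym2.mem_mk_right _ _⟩]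

theorem inr_mem_spiderRoots_iff {p : Σ i, Fin (kv i)} :
    Sum.inr p ∈ spiderRoots s kv ↔ p.2.val + 1 = kv p.1 := by
  simp only [spiderRoots, Set.mem_range, spiderVtx_eq_inr_iff]
  exact ⟨fun ⟨_, rfl, h⟩ => h, fun h => ⟨p.1, rfl, h⟩⟩

theorem inl_notMem_spiderRoots (hkv : ∀ i, 1 ≤ kv i) : Sum.inl () ∉ spiderRoots s kv := by
  rintro ⟨i, hi⟩
  exact Sum.inr_ne_inl ((spiderVtx_of_pos (hkv i) le_rfl).symm.trans hi)

theorem innerEnd_notMem_spiderRoots (hkv : ∀ i, 1 ≤ kv i) (p : Σ i, Fin (kv i)) :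
    innerEnd kv p ∉ spiderRoots s kv := by
  obtain ⟨i, ⟨_ | a, ha⟩⟩ := p
  · rw [innerEnd, spiderVtx_zero]
    exact inl_notMem_spiderRoots hkv
  · rw [innerEnd, spiderVtx_succ ⟨i, ⟨a, by omega⟩⟩, inr_mem_spiderRoots_iff]
    simp only
    omega

theorem ncard_spiderRoots (hkv : ∀ i, 1 ≤ kv i) : (spiderRoots s kv).ncard = s := by
  rw [spiderRoots, Set.ncard_range_of_injective, Nat.card_eq_fintype_card, Fintype.card_fin]
  intro i j hij
  exact (spiderVtx_eq_inr_iff.1 (hij.symm.trans (spiderVtx_of_pos (hkv i) le_rfl))).1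

theorem ncard_compl_spiderRoots (hkv : ∀ i, 1 ≤ kv i) :
    (spiderRoots s kv)ᶜ.ncard = ∑ i, kv i + 1 - s := by
  have h := Set.ncard_add_ncard_compl (spiderRoots s kv)
  rw [ncard_spiderRoots hkv] at h
  simp [Nat.card_eq_fintype_card] at h
  omega

theorem edgesTouching_compl_spiderRoots (hkv : ∀ i, 1 ≤ kv i) :
    edgesTouching (SpiderGraph s kv) (spiderRoots s kv)ᶜ = ∑ i, kv i := by
  have hall : {p | innerEnd kv p ∈ (spiderRoots s kv)ᶜ ∨ Sum.inr p ∈ (spiderRoots s kv)ᶜ} =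
      Set.univ :=
    Set.eq_univ_of_forall fun p => Or.inl (innerEnd_notMem_spiderRoots hkv p)
  rw [edgesTouching_spiderGraph, hall, Set.ncard_univ]
  simp [Nat.card_eq_fintype_card]

theorem le_sum_of_one_le (hkv : ∀ i, 1 ≤ kv i) : s ≤ ∑ i, kv i := by
  simpa using Finset.card_nsmul_le_sum Finset.univ kv 1 fun i _ => hkv i

section Density

variable {S : Set (SpiderVtx s kv)}

theorem ncard_innerEnd_mem (hS : S ⊆ (spiderRoots s kv)ᶜ) :
    {p | 0 < p.2.val ∧ innerEnd kv p ∈ S}.ncard = (S \ {Sum.inl ()}).ncard := by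
  rw [← Set.InjOn.ncard_image (f := innerEnd kv)]
  · congr 1
    ext v
    simp only [Set.mem_image, Set.mem_ofPred_eq, Set.mem_sdiff, Set.mem_singleton_iff]
    constructor
    · rintro ⟨p, ⟨hp, hpS⟩, rfl⟩
      exact ⟨hpS, by simp [innerEnd_of_pos hp]⟩
    · rintro ⟨hvS, hv⟩
      obtain _ | q := v
      · exact absurd rfl hv
      have hq : q.2.val + 1 < kv q.1 := by
        have := q.2.isLt
        have := inr_mem_spiderRoots_iff.not.1 (hS hvS)
        omega
      have he : innerEnd kv ⟨q.1, ⟨q.2.val + 1, hq⟩⟩ = Sum.inr q := spiderVtx_succ q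
      exact ⟨_, ⟨Nat.succ_pos _, he ▸ hvS⟩, he⟩
  · rintro p ⟨hp, -⟩ q ⟨hq, -⟩ hpq
    rw [innerEnd_of_pos hp, eq_comm, innerEnd_eq_inr_iff] at hpq
    exact sigma_fin_ext hpq.1 (by simp only at hpq; omega)

theorem ncard_sub_one_add_le_edgesTouching (hkv : ∀ i, 1 ≤ kv i)
    (hS : S ⊆ (spiderRoots s kv)ᶜ) (hc : Sum.inl () ∈ S) :
    S.ncard - 1 + s ≤ edgesTouching (SpiderGraph s kv) S := by
  have hcentre : {p : Σ i, Fin (kv i) | p.2.val = 0}.ncard = s := by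
    have : {p : Σ i, Fin (kv i) | p.2.val = 0} = Set.range fun i => ⟨i, ⟨0, hkv i⟩⟩ := by
      ext p
      exact ⟨fun h => ⟨p.1, sigma_fin_ext rfl h.symm⟩, by rintro ⟨i, rfl⟩; rfl⟩
    rw [this, Set.ncard_range_of_injective fun i j h => congrArg Sigma.fst h]
    simp
  have hdisj : Disjoint {p : Σ i, Fin (kv i) | 0 < p.2.val ∧ innerEnd kv p ∈ S}
      {p | p.2.val = 0} :=
    Set.disjoint_left.2 fun p h h0 => (Nat.ne_of_gt h.1) h0
  have hsub : {p | 0 < p.2.val ∧ innerEnd kv p ∈ S} ∪ {p | p.2.val = 0} ⊆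
      {p | innerEnd kv p ∈ S ∨ Sum.inr p ∈ S} := by
    rintro p (⟨-, hp⟩ | hp)
    · exact Or.inl hp
    · exact Or.inl ((innerEnd_of_eq_zero hp).symm ▸ hc)
  have := Set.ncard_le_ncard hsub
  rwa [Set.ncard_union_eq hdisj, ncard_innerEnd_mem hS, Set.ncard_sdiff_singleton_of_mem hc,
    hcentre, ← edgesTouching_spiderGraph] at this

/-- Walking from a vertex of `S` towards the centre, which is not in `S`, one leaves `S`: every
leg meeting `S` contains an edge entering `S` from the centre side. -/
theorem ncard_fst_image_le_ncard_entering (hc : Sum.inl () ∉ S) :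
    (Sigma.fst '' (Sum.inr ⁻¹' S)).ncard ≤ {p | innerEnd kv p ∉ S ∧ Sum.inr p ∈ S}.ncard := by
  refine (Set.ncard_le_ncard (t := Sigma.fst '' _) ?_ (Set.toFinite _)).trans
    (Set.ncard_image_le (Set.toFinite _))
  suffices h : ∀ (n : ℕ) (q : Σ i, Fin (kv i)), q.2.val = n → Sum.inr q ∈ S →
      ∃ p, (innerEnd kv p ∉ S ∧ Sum.inr p ∈ S) ∧ p.1 = q.1 by
    rintro _ ⟨q, hq, rfl⟩
    exact h _ q rfl hq
  intro n
  induction n with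
  | zero => exact fun q hq hqS => ⟨q, ⟨by rwa [innerEnd_of_eq_zero hq], hqS⟩, rfl⟩
  | succ n ih =>
    intro q hq hqS
    by_cases hin : innerEnd kv q ∈ S
    · rw [innerEnd_of_pos (by omega)] at hin
      exact ih ⟨q.1, ⟨q.2.val - 1, by omega⟩⟩ (by simp only [hq]; omega) hin
    · exact ⟨q, ⟨hin, hqS⟩, rfl⟩

theorem ncard_preimage_inr_le {k : ℕ} (hk : ∀ i, kv i ≤ k) (hS : S ⊆ (spiderRoots s kv)ᶜ) :
    (Sum.inr ⁻¹' S).ncard ≤ (k - 1) * (Sigma.fst '' (Sum.inr ⁻¹' S)).ncard := by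
  have h := Set.ncard_le_ncard_of_injOn (fun q : Σ i, Fin (kv i) => (q.1, q.2.val))
    (s := Sum.inr ⁻¹' S) (t := (Sigma.fst '' (Sum.inr ⁻¹' S)) ×ˢ Set.Iio (k - 1)) ?_ ?_
  · rwa [Set.ncard_prod, Set.ncard_Iio_nat, mul_comm] at h
  · intro q hq
    have := q.2.isLt
    have := hk q.1
    have := inr_mem_spiderRoots_iff.not.1 (hS hq)
    exact ⟨⟨q, hq, rfl⟩, by simp only [Set.mem_Iio]; omega⟩
  · intro q _ q' _ h
    exact sigma_fin_ext (congrArg Prod.fst h) (congrArg Prod.snd h)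

theorem mul_ncard_le_mul_edgesTouching {k : ℕ} (hk : ∀ i, kv i ≤ k)
    (hS : S ⊆ (spiderRoots s kv)ᶜ) (hc : Sum.inl () ∉ S) :
    k * S.ncard ≤ (k - 1) * edgesTouching (SpiderGraph s kv) S := by
  set n := S.ncard
  set b := {p | innerEnd kv p ∉ S ∧ Sum.inr p ∈ S}.ncard
  have hn : (Sum.inr ⁻¹' S).ncard = n := by
    refine Set.ncard_preimage_of_injective_subset_range Sum.inr_injective fun v hv => ?_
    obtain _ | q := v
    exacts [absurd hv hc, ⟨q, rfl⟩]
  have hnb : n ≤ (k - 1) * b := hn ▸ (ncard_preimage_inr_le hk hS).trans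
    (Nat.mul_le_mul_left _ (ncard_fst_image_le_ncard_entering hc))
  have hne : n + b ≤ edgesTouching (SpiderGraph s kv) S := by
    have hdisj : Disjoint {p : Σ i, Fin (kv i) | 0 < p.2.val ∧ innerEnd kv p ∈ S}
        {p | innerEnd kv p ∉ S ∧ Sum.inr p ∈ S} :=
      Set.disjoint_left.2 fun p h h' => h'.1 h.2
    have hsub : {p | 0 < p.2.val ∧ innerEnd kv p ∈ S} ∪ {p | innerEnd kv p ∉ S ∧ Sum.inr p ∈ S} ⊆
        {p | innerEnd kv p ∈ S ∨ Sum.inr p ∈ S} := by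
      rintro p (⟨-, hp⟩ | ⟨-, hp⟩)
      exacts [Or.inl hp, Or.inr hp]
    have := Set.ncard_le_ncard hsub
    rwa [Set.ncard_union_eq hdisj, ncard_innerEnd_mem hS, Set.sdiff_singleton_eq_self hc,
      ← edgesTouching_spiderGraph] at this
  calc k * n ≤ (k - 1 + 1) * n := Nat.mul_le_mul_right _ (by omega)
    _ = (k - 1) * n + n := by ring
    _ ≤ (k - 1) * n + (k - 1) * b := by gcongr
    _ = (k - 1) * (n + b) := by ring
    _ ≤ (k - 1) * edgesTouching (SpiderGraph s kv) S := by gcongr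

end Density

variable (kv) in
def legInterior (i : Fin s) : Set (SpiderVtx s kv) := spiderVtx kv i '' Set.Ioo 0 (kv i)

theorem legInterior_subset_compl_spiderRoots (i : Fin s) :
    legInterior kv i ⊆ (spiderRoots s kv)ᶜ := by
  rintro _ ⟨a, ⟨ha0, ha⟩, rfl⟩
  rw [spiderVtx_of_pos ha0 ha.le, Set.mem_compl_iff, inr_mem_spiderRoots_iff]
  simp only
  omega

theorem ncard_legInterior (i : Fin s) : (legInterior kv i).ncard = kv i - 1 := by
  rw [legInterior, Set.InjOn.ncard_image, Set.ncard_Ioo_nat, Nat.sub_zero]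
  rintro a ⟨ha0, ha⟩ b ⟨hb0, hb⟩ hab
  rw [spiderVtx_of_pos hb0 hb.le, spiderVtx_eq_inr_iff] at hab
  simp only at hab
  omega

theorem edgesTouching_legInterior_le (i : Fin s) :
    edgesTouching (SpiderGraph s kv) (legInterior kv i) ≤ kv i := by
  rw [edgesTouching_spiderGraph]
  calc _ ≤ (Set.range (Sigma.mk i)).ncard := Set.ncard_le_ncard ?_ (Set.toFinite _)
    _ = kv i := by rw [Set.ncard_range_of_injective sigma_mk_injective]; simp
  rw [Set.range_sigmaMk]
  rintro p (⟨a, ⟨ha0, ha⟩, hp⟩ | ⟨a, -, hp⟩)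
  · rw [spiderVtx_of_pos ha0 ha.le, eq_comm, innerEnd_eq_inr_iff] at hp
    exact hp.1.symm
  · exact (spiderVtx_eq_inr_iff.1 hp).1

theorem sum_mul_ncard_le_edgesTouching_mul (hs : 1 ≤ s) (hkv : ∀ i, 1 ≤ kv i)
    (hsup : (s - 1) * Finset.univ.sup kv ≤ ∑ i, kv i) {S : Set (SpiderVtx s kv)}
    (hS : S ⊆ (spiderRoots s kv)ᶜ) (hne : S.Nonempty) :
    (∑ i, kv i) * S.ncard ≤ edgesTouching (SpiderGraph s kv) S * (∑ i, kv i + 1 - s) := by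
  have hsK := le_sum_of_one_le hkv
  have hn := hne.ncard_pos
  by_cases hc : Sum.inl () ∈ S
  · have he := ncard_sub_one_add_le_edgesTouching hkv hS hc
    have hnK : S.ncard ≤ ∑ i, kv i + 1 - s :=
      ncard_compl_spiderRoots hkv ▸ Set.ncard_le_ncard hS
    generalize ∑ i, kv i = K at *
    zify [hn, hsK.trans K.le_succ, hs] at he hnK ⊢
    nlinarith
  · have hk : ∀ i, kv i ≤ Finset.univ.sup kv := fun i => Finset.le_sup (Finset.mem_univ i)
    have hk1 : 1 ≤ Finset.univ.sup kv := (hkv ⟨0, hs⟩).trans (hk _)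
    have he := mul_ncard_le_mul_edgesTouching hk hS hc
    generalize ∑ i, kv i = K at *
    zify [hk1, hsK.trans K.le_succ, hs] at he hsup ⊢
    nlinarith

theorem sub_one_mul_le_sum_of_forall_mul_le (hkv : ∀ i, 1 ≤ kv i) (i : Fin s)
    (hbal : ∀ S ⊆ (spiderRoots s kv)ᶜ, S.Nonempty →
      (∑ i, kv i) * S.ncard ≤ edgesTouching (SpiderGraph s kv) S * (∑ i, kv i + 1 - s)) :
    (s - 1) * kv i ≤ ∑ i, kv i := by
  have hsK := le_sum_of_one_le hkv
  rcases Nat.lt_or_ge 1 (kv i) with hi2 | hi1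
  · have h := hbal _ (legInterior_subset_compl_spiderRoots i) ⟨_, 1, ⟨one_pos, hi2⟩, rfl⟩
    rw [ncard_legInterior] at h
    have h' := h.trans (Nat.mul_le_mul_right _ (edgesTouching_legInterior_le i))
    generalize ∑ i, kv i = K at *
    zify [hi2.le, hsK.trans K.le_succ, i.pos] at h' ⊢
    nlinarith
  · calc (s - 1) * kv i ≤ s - 1 := by simpa using Nat.mul_le_mul_left (s - 1) hi1
      _ ≤ ∑ i, kv i := by omega

end Spider

/-- the `s`-legged spider with length vector `(k_1, …, k_s)`, rooted at
its leaves, is balanced if and only if `k_1 + ⋯ + k_s ≥ (s - 1) max_i k_i`. -/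
theorem spider_balanced_iff (s : ℕ) (hs : 2 ≤ s) (kv : Fin s → ℕ) (hkv : ∀ i, 1 ≤ kv i) :
    IsBalanced (SpiderGraph s kv) (spiderRoots s kv) ↔
      (s - 1) * (Finset.univ.sup kv) ≤ ∑ i, kv i := by
  rw [isBalanced_iff_forall_mul_le ⟨_, inl_notMem_spiderRoots hkv⟩,
    edgesTouching_compl_spiderRoots hkv, ncard_compl_spiderRoots hkv]
  constructor
  · intro hbal
    obtain ⟨i, -, hi⟩ :=
      Finset.exists_mem_eq_sup Finset.univ ⟨⟨0, by omega⟩, Finset.mem_univ _⟩ kv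
    rw [hi]
    exact sub_one_mul_le_sum_of_forall_mul_le hkv i hbal
  · exact fun hsup S hS hne =>
      sum_mul_ncard_le_edgesTouching_mul (by omega) hkv hsup hS hne

end ExtremalSubdivision
end
end
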